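/- Let P, P' ⊆ ℝ² be nonempty open bounded convex polygons and let x_c be a vertex of P such that dist(x_c, P') = d_H(P, P'), where d_H denotes Hausdorff distance. If Q is the convex hull of P ∪ P', then x_c is an extreme point (vertex) of Q. -/

import Mathlib

/-!
The distance `f = infDist · P'` to the convex set `P'` is convex. On the closed hull
`Q = convexJoin (closure P) (closure P')` it is therefore bounded by `d = d_H(P, P')`, its bound on
`closure P`, so the set where `f = d` is an extreme subset of `Q`. If `d > 0` this set lies in
`closure P`: `f` vanishes on `closure P'`, so by convexity `f < d` on every segment from
`closure P` to `closure P'` except at its first endpoint. An extreme point of `closure P` at which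
`f = d` is thus extreme in that set, hence in `Q`. If `d = 0` the closures of `P` and `P'`
coincide and `Q = closure P`.
-/

open Metric Set

section ConvexJoin

variable {E : Type*} [AddCommGroup E] [Module ℝ E]

theorem Convex.convexJoin_self {s : Set E} (hs : Convex ℝ s) (hne : s.Nonempty) :
    convexJoin ℝ s s = s :=
  (convexJoin_subset subset_rfl subset_rfl hs).antisymm (subset_convexJoin_left hne)

variable [TopologicalSpace E] [IsTopologicalAddGroup E] [ContinuousSMul ℝ E]

theorem isCompact_convexJoin {s t : Set E} (hs : IsCompact s) (ht : IsCompact t) :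
    IsCompact (convexJoin ℝ s t) := by
  have himage : convexJoin ℝ s t =
      (fun p : ℝ × E × E => (1 - p.1) • p.2.1 + p.1 • p.2.2) '' (Icc 0 1 ×ˢ s ×ˢ t) := by
    ext x
    simp only [mem_convexJoin, segment_eq_image, mem_image, mem_prod, Prod.exists]
    constructor
    · rintro ⟨a, ha, b, hb, c, hc, rfl⟩
      exact ⟨c, a, b, ⟨hc, ha, hb⟩, rfl⟩
    · rintro ⟨c, a, b, ⟨hc, ha, hb⟩, rfl⟩
      exact ⟨a, ha, b, hb, c, hc, rfl⟩
  rw [himage]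
  exact (isCompact_Icc.prod (hs.prod ht)).image (by fun_prop)

variable [T2Space E]

theorem closure_convexHull_union_eq_convexJoin {s t : Set E} (hs : Convex ℝ s)
    (ht : Convex ℝ t) (hsne : s.Nonempty) (htne : t.Nonempty)
    (hsc : IsCompact (closure s)) (htc : IsCompact (closure t)) :
    closure (convexHull ℝ (s ∪ t)) = convexJoin ℝ (closure s) (closure t) := by
  rw [← hs.closure.convexHull_union ht.closure hsne.closure htne.closure]
  apply Subset.antisymm
  · refine closure_minimal (convexHull_mono (union_subset_union subset_closure subset_closure)) ?_
    rw [hs.closure.convexHull_union ht.closure hsne.closure htne.closure]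
    exact (isCompact_convexJoin hsc htc).isClosed
  · refine convexHull_min ?_ (convex_convexHull ℝ _).closure
    rw [← closure_union]
    exact closure_mono (subset_convexHull ℝ _)

end ConvexJoin

theorem convexOn_infDist {E : Type*} [NormedAddCommGroup E] [NormedSpace ℝ E] {s : Set E}
    (hs : Convex ℝ s) : ConvexOn ℝ univ (infDist · s) := by
  refine ⟨convex_univ, fun x _ y _ a b ha hb hab => ?_⟩
  rcases s.eq_empty_or_nonempty with rfl | hne
  · simp
  refine le_of_forall_pos_le_add fun ε hε => ?_
  obtain ⟨p, hp, hxp⟩ := (infDist_lt_iff hne).1 (lt_add_of_pos_right (infDist x s) hε)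
  obtain ⟨q, hq, hyq⟩ := (infDist_lt_iff hne).1 (lt_add_of_pos_right (infDist y s) hε)
  calc infDist (a • x + b • y) s
      ≤ dist (a • x + b • y) (a • p + b • q) := infDist_le_dist_of_mem (hs hp hq ha hb hab)
    _ ≤ a * dist x p + b * dist y q := by
        refine (dist_add_add_le _ _ _ _).trans_eq ?_
        rw [dist_smul₀, dist_smul₀, Real.norm_of_nonneg ha, Real.norm_of_nonneg hb]
    _ ≤ a * (infDist x s + ε) + b * (infDist y s + ε) := by gcongr
    _ = a • infDist x s + b • infDist y s + ε := by
        rw [smul_eq_mul, smul_eq_mul]; linear_combination ε * hab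

section ConvexOn

variable {E : Type*} [AddCommGroup E] [Module ℝ E] {f : E → ℝ} {m : ℝ}

theorem ConvexOn.isExtreme_setOf_eq {A : Set E} (hf : ConvexOn ℝ A f)
    (hle : ∀ y ∈ A, f y ≤ m) : IsExtreme ℝ A {y ∈ A | f y = m} := by
  refine ⟨sep_subset _ _, fun y hy z hz x ⟨_, hfx⟩ hxyz => ⟨hy, ?_⟩⟩
  by_contra hfy
  have hfyx : f y < f x := hfx ▸ (hle y hy).lt_of_ne hfy
  exact (hf.lt_right_of_left_lt hy hz hxyz hfyx).not_ge (hfx ▸ hle z hz)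

theorem ConvexOn.le_on_convexJoin {K K' : Set E} (hf : ConvexOn ℝ univ f)
    (hK : ∀ a ∈ K, f a ≤ m) (hK' : ∀ b ∈ K', f b ≤ m) :
    ∀ y ∈ convexJoin ℝ K K', f y ≤ m := by
  intro y hy
  obtain ⟨a, ha, b, hb, hy⟩ := mem_convexJoin.1 hy
  exact (hf.le_on_segment (mem_univ a) (mem_univ b) hy).trans (max_le (hK a ha) (hK' b hb))

theorem ConvexOn.mem_left_of_mem_convexJoin_of_le {K K' : Set E} (hf : ConvexOn ℝ univ f)
    (hK : ∀ a ∈ K, f a ≤ m) (hK' : ∀ b ∈ K', f b < m) {y : E}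
    (hy : y ∈ convexJoin ℝ K K') (hfy : m ≤ f y) : y ∈ K := by
  obtain ⟨a, ha, b, hb, hyab⟩ := mem_convexJoin.1 hy
  by_cases hya : a = y
  · exact hya ▸ ha
  have hyb : b ≠ y := by rintro rfl; exact (hK' b hb).not_ge hfy
  have hy' := mem_openSegment_of_ne_left_right hya hyb hyab
  exact absurd (hf.lt_left_of_right_lt (mem_univ a) (mem_univ b) hy'
    ((hK' b hb).trans_le hfy)) ((hK a ha).trans hfy).not_gt

end ConvexOn

theorem stmt_12_general (P P' : Set (EuclideanSpace ℝ (Fin 2)))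
    (hPne : P.Nonempty) (hP'ne : P'.Nonempty)
    (hPb : Bornology.IsBounded P) (hP'b : Bornology.IsBounded P')
    (hPc : Convex ℝ P) (hP'c : Convex ℝ P')
    (x_c : EuclideanSpace ℝ (Fin 2))
    (hvert : x_c ∈ Set.extremePoints ℝ (closure P))
    (hdist : Metric.infDist x_c P' = Metric.hausdorffDist P P') :
    x_c ∈ Set.extremePoints ℝ (closure (convexHull ℝ (P ∪ P'))) := by
  have hfin : hausdorffEDist P P' ≠ ⊤ :=
    hausdorffEDist_ne_top_of_nonempty_of_bounded hPne hP'ne hPb hP'b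
  rw [closure_convexHull_union_eq_convexJoin hPc hP'c hPne hP'ne hPb.isCompact_closure
    hP'b.isCompact_closure]
  rcases (hausdorffDist_nonneg (s := P) (t := P')).eq_or_lt with hzero | hpos
  · rw [← (hausdorffDist_zero_iff_closure_eq_closure hfin).1 hzero.symm,
      hPc.closure.convexJoin_self hPne.closure]
    exact hvert
  set Q := convexJoin ℝ (closure P) (closure P')
  have hf := convexOn_infDist hP'c
  have hfP : ∀ a ∈ closure P, infDist a P' ≤ hausdorffDist P P' := fun a ha => by
    rw [← hausdorffDist_closure₁]
    exact infDist_le_hausdorffDist_of_mem ha (by rwa [hausdorffEDist_closure_left])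
  have hfP' : ∀ b ∈ closure P', infDist b P' < hausdorffDist P P' := fun b hb =>
    (infDist_zero_of_mem_closure hb).trans_lt hpos
  have hface : IsExtreme ℝ Q {y ∈ Q | infDist y P' = hausdorffDist P P'} :=
    (hf.subset (subset_univ Q) (hPc.closure.convexJoin hP'c.closure)).isExtreme_setOf_eq
      (hf.le_on_convexJoin hfP fun b hb => (hfP' b hb).le)
  have hface_sub : {y ∈ Q | infDist y P' = hausdorffDist P P'} ⊆ closure P :=
    fun y ⟨hy, hfy⟩ => hf.mem_left_of_mem_convexJoin_of_le hfP hfP' hy hfy.ge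
  have hxQ : x_c ∈ Q := subset_convexJoin_left hP'ne.closure hvert.1
  exact hface.extremePoints_subset_extremePoints
    (inter_extremePoints_subset_extremePoints_of_subset hface_sub ⟨⟨hxQ, hdist⟩, hvert⟩)

theorem stmt_12 (P P' : Set (EuclideanSpace ℝ (Fin 2)))
    (hPne : P.Nonempty) (hP'ne : P'.Nonempty)
    (hPo : IsOpen P) (hP'o : IsOpen P')
    (hPb : Bornology.IsBounded P) (hP'b : Bornology.IsBounded P')
    (hPc : Convex ℝ P) (hP'c : Convex ℝ P')
    (hPpoly : ∃ F : Finset (EuclideanSpace ℝ (Fin 2)),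
      closure P = convexHull ℝ (F : Set (EuclideanSpace ℝ (Fin 2))))
    (hP'poly : ∃ F : Finset (EuclideanSpace ℝ (Fin 2)),
      closure P' = convexHull ℝ (F : Set (EuclideanSpace ℝ (Fin 2))))
    (x_c : EuclideanSpace ℝ (Fin 2))
    (hvert : x_c ∈ Set.extremePoints ℝ (closure P))
    (hdist : Metric.infDist x_c P' = Metric.hausdorffDist P P') :
    x_c ∈ Set.extremePoints ℝ (closure (convexHull ℝ (P ∪ P'))) :=
  stmt_12_general P P' hPne hP'ne hPb hP'b hPc hP'c x_c hvert hdist
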